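/- Let D = D^b(nilpotent representations of the quiver with one loop at vertex 1 and one arrow 1 → 2) with heart H and simples s₁, s₂. Then the object s₂[1] admits no right ⟨s₁⟩-approximation; consequently, the right simple tilt of H at s₁ is not a length heart. -/

import Mathlib

open CategoryTheory Category Limits Pretriangulated

universe v u

namespace SMPaper

variable {C : Type u} [Category.{v} C] [Preadditive C] [HasZeroObject C] [HasShift C ℤ]
  [∀ n : ℤ, (shiftFunctor C n).Additive] [Pretriangulated C]

/-- The image of a set of objects under the `n`-th shift, closed under isomorphism. -/
def shiftSet (S : Set C) (n : ℤ) : Set C :=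
  {d | ∃ s ∈ S, Nonempty ((shiftFunctor C n).obj s ≅ d)}

/-- The extension product `A * B`: objects `d` fitting in a triangle `a → d → b → a[1]`. -/
def star (A B : Set C) : Set C :=
  {d | ∃ (a b : C) (f : a ⟶ d) (g : d ⟶ b) (h : b ⟶ (shiftFunctor C (1 : ℤ)).obj a),
    a ∈ A ∧ b ∈ B ∧ Triangle.mk f g h ∈ (distTriang C)}

/-- `Hom(A, B) = 0`. -/
def homOrth (A B : Set C) : Prop :=
  ∀ ⦃a : C⦄, a ∈ A → ∀ ⦃b : C⦄, b ∈ B → ∀ f : a ⟶ b, f = 0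

/-- Right perpendicular `S^⊥`. -/
def rPerp (S : Set C) : Set C := {d | ∀ s ∈ S, ∀ f : s ⟶ d, f = 0}

/-- Left perpendicular `^⊥S`. -/
def lPerp (S : Set C) : Set C := {d | ∀ s ∈ S, ∀ f : d ⟶ s, f = 0}

def isoClosure (S : Set C) : Set C := {d | ∃ s ∈ S, Nonempty (s ≅ d)}

/-- The extension closure of a set of objects. -/
inductive ExtClosureP (S : Set C) : C → Prop
  | of (s : C) : s ∈ S → ExtClosureP S s
  | zero (z : C) : IsZero z → ExtClosureP S z
  | iso (x y : C) : (x ≅ y) → ExtClosureP S x → ExtClosureP S y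
  | ext (a d b : C) (f : a ⟶ d) (g : d ⟶ b) (h : b ⟶ (shiftFunctor C (1 : ℤ)).obj a) :
      Triangle.mk f g h ∈ (distTriang C) → ExtClosureP S a → ExtClosureP S b → ExtClosureP S d

def extClosure (S : Set C) : Set C := {d | ExtClosureP S d}

/-- `⟨S⟩[i] * ⟨S⟩[i-1] * ⋯ * ⟨S⟩[i-n]`. -/
def prodDown (S : Set C) : ℤ → ℕ → Set C
  | i, 0 => shiftSet (extClosure S) i
  | i, n + 1 => star (shiftSet (extClosure S) i) (prodDown S (i - 1) n)

/-- `susp S = ⋃_{n ≥ 0} ⟨S⟩[n] * ⋯ * ⟨S⟩[0]`. -/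
def suspSet (S : Set C) : Set C := {d | ∃ n : ℕ, d ∈ prodDown S n n}

/-- `cosusp S = ⋃_{n ≥ 0} ⟨S⟩[0] * ⋯ * ⟨S⟩[-n]`. -/
def cosuspSet (S : Set C) : Set C := {d | ∃ n : ℕ, d ∈ prodDown S 0 n}

/-- `cosusp (S[-1]) = ⋃_{n ≥ 0} ⟨S⟩[-1] * ⋯ * ⟨S⟩[-1-n]`. -/
def cosuspNeg (S : Set C) : Set C := {d | ∃ n : ℕ, d ∈ prodDown S (-1) n}

/-- A t-structure `(X, Y)`: full (iso-closed, containing zero) subcategories with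
`Hom(X, Y) = 0`, `D = X * Y` and `X[1] ⊆ X`. -/
structure IsTStructure (X Y : Set C) : Prop where
  isoX : ∀ ⦃x y : C⦄, (x ≅ y) → x ∈ X → y ∈ X
  isoY : ∀ ⦃x y : C⦄, (x ≅ y) → x ∈ Y → y ∈ Y
  zeroX : ∀ z : C, IsZero z → z ∈ X
  zeroY : ∀ z : C, IsZero z → z ∈ Y
  hom : homOrth X Y
  gen : ∀ d : C, d ∈ star X Y
  shift : shiftSet X 1 ⊆ X

/-- A co-t-structure `(W, X)`. -/
structure IsCoTStructure (W X : Set C) : Prop where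
  isoW : ∀ ⦃x y : C⦄, (x ≅ y) → x ∈ W → y ∈ W
  isoX : ∀ ⦃x y : C⦄, (x ≅ y) → x ∈ X → y ∈ X
  zeroW : ∀ z : C, IsZero z → z ∈ W
  zeroX : ∀ z : C, IsZero z → z ∈ X
  hom : homOrth W X
  gen : ∀ d : C, d ∈ star W X
  shift : shiftSet W (-1) ⊆ W

/-- The heart `X ∩ Y[1]` of a t-structure. -/
def heart (X Y : Set C) : Set C := X ∩ shiftSet Y 1

/-- Boundedness of a torsion pair/t-structure. -/
def IsBoundedTS (X Y : Set C) : Prop :=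
  ∀ d : C, (∃ n : ℤ, d ∈ shiftSet X n) ∧ (∃ n : ℤ, d ∈ shiftSet Y n)

/-- A torsion pair `(T, F)` in the heart `H`: `Hom(T, F) = 0` and every object of `H`
is an extension of an object of `F` by an object of `T`. -/
structure IsTorsionPairIn (H T F : Set C) : Prop where
  isoT : ∀ ⦃x y : C⦄, (x ≅ y) → x ∈ T → y ∈ T
  isoF : ∀ ⦃x y : C⦄, (x ≅ y) → x ∈ F → y ∈ F
  subT : T ⊆ H
  subF : F ⊆ H
  hom : homOrth T F
  gen : H ⊆ star T F

/-- `f : x → d` is a right `S`-approximation. -/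
def IsRightApprox (S : Set C) {x d : C} (f : x ⟶ d) : Prop :=
  x ∈ S ∧ ∀ ⦃x' : C⦄, x' ∈ S → ∀ g : x' ⟶ d, ∃ h : x' ⟶ x, h ≫ f = g

/-- `f : d → x` is a left `S`-approximation. -/
def IsLeftApprox (S : Set C) {d x : C} (f : d ⟶ x) : Prop :=
  x ∈ S ∧ ∀ ⦃x' : C⦄, x' ∈ S → ∀ g : d ⟶ x', ∃ h : x ⟶ x', f ≫ h = g

def RightMinimal {x d : C} (f : x ⟶ d) : Prop :=
  ∀ β : x ⟶ x, β ≫ f = f → IsIso β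

def LeftMinimal {d x : C} (f : d ⟶ x) : Prop :=
  ∀ β : x ⟶ x, f ≫ β = f → IsIso β

def HasRightApprox (S : Set C) (d : C) : Prop := ∃ (x : C) (f : x ⟶ d), IsRightApprox S f

def HasLeftApprox (S : Set C) (d : C) : Prop := ∃ (x : C) (f : d ⟶ x), IsLeftApprox S f

def ContravariantlyFiniteIn (S A : Set C) : Prop := ∀ d ∈ A, HasRightApprox S d

def CovariantlyFiniteIn (S A : Set C) : Prop := ∀ d ∈ A, HasLeftApprox S d

/-- An orthogonal collection (semibrick). -/
structure IsOrthogonal (U : Set C) : Prop where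
  nonzero : ∀ u ∈ U, ¬ IsZero u
  hom : ∀ ⦃u v : C⦄, u ∈ U → v ∈ U → ¬ Nonempty (u ≅ v) → ∀ f : u ⟶ v, f = 0
  div : ∀ u ∈ U, ∀ f : u ⟶ u, f = 0 ∨ IsIso f

/-- An `∞`-orthogonal collection. -/
def IsInfOrthogonal (U : Set C) : Prop :=
  IsOrthogonal U ∧ ∀ ⦃u v : C⦄, u ∈ U → v ∈ U → ∀ m : ℤ, 0 < m →
    ∀ f : (shiftFunctor C m).obj u ⟶ v, f = 0

/-- A simple-minded collection. -/
def IsSMC (U : Set C) : Prop :=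
  IsInfOrthogonal U ∧ ∀ d : C, ∃ i j : ℤ, j ≤ i ∧ d ∈ prodDown U i (i - j).toNat

/-- `m` is a right mutation `∂_S(d)` of `d` with respect to `S`. -/
def IsRightMutation (S : Set C) (d m : C) : Prop :=
  (d ∈ S ∧ Nonempty (d ≅ m)) ∨
  (d ∉ S ∧ ∃ (s : C) (f : s ⟶ (shiftFunctor C (1 : ℤ)).obj d)
      (g : (shiftFunctor C (1 : ℤ)).obj d ⟶ m) (h : m ⟶ (shiftFunctor C (1 : ℤ)).obj s),
    IsRightApprox (extClosure S) f ∧ RightMinimal f ∧ Triangle.mk f g h ∈ (distTriang C))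

/-- `m` is a left mutation `∂⁻_S(d)` of `d` with respect to `S`. -/
def IsLeftMutation (S : Set C) (d m : C) : Prop :=
  (d ∈ S ∧ Nonempty (d ≅ m)) ∨
  (d ∉ S ∧ ∃ (s : C) (g : m ⟶ (shiftFunctor C (-1 : ℤ)).obj d)
      (f : (shiftFunctor C (-1 : ℤ)).obj d ⟶ s) (h : s ⟶ (shiftFunctor C (1 : ℤ)).obj m),
    IsLeftApprox (extClosure S) f ∧ LeftMinimal f ∧ Triangle.mk g f h ∈ (distTriang C))

def rightMutationSet (S U : Set C) : Set C := {m | ∃ u ∈ U, IsRightMutation S u m}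

def leftMutationSet (S U : Set C) : Set C := {m | ∃ u ∈ U, IsLeftMutation S u m}

/-- `h` is a simple object of the heart `H`. -/
def IsSimpleIn (H : Set C) (h : C) : Prop :=
  h ∈ H ∧ ¬ IsZero h ∧
    ∀ (a b : C) (f : a ⟶ h) (g : h ⟶ b) (w : b ⟶ (shiftFunctor C (1 : ℤ)).obj a),
      a ∈ H → b ∈ H → Triangle.mk f g w ∈ (distTriang C) → IsZero a ∨ IsZero b

def simplesOf (H : Set C) : Set C := {h | IsSimpleIn H h}

/-- A heart is a length category iff every object has a finite composition series, i.e.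
lies in the extension closure of the simple objects. -/
def HeartIsLength (H : Set C) : Prop := H ⊆ extClosure (simplesOf H)

/-- A bounded t-structure with length heart. -/
def IsLengthHeart (X Y : Set C) : Prop :=
  IsTStructure X Y ∧ IsBoundedTS X Y ∧ HeartIsLength (heart X Y)

/-- An `S`-mutation pair `(A, B)`. -/
def IsSMutationPair (S A B : Set C) : Prop :=
  isoClosure A =
    lPerp S ∩ rPerp S ∩ lPerp (shiftSet S (-1)) ∩ shiftSet (star (extClosure S) B) (-1) ∧
  isoClosure B =
    lPerp S ∩ rPerp S ∩ rPerp (shiftSet S 1) ∩ shiftSet (star A (extClosure S)) 1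

/-- The conditions of the SMC Setup. -/
def SMCSetup (S : Set C) : Prop :=
  CovariantlyFiniteIn (extClosure S)
    {d | ∀ s ∈ S, ∀ m : ℤ, m < 0 → ∀ f : d ⟶ (shiftFunctor C m).obj s, f = 0} ∧
  ContravariantlyFiniteIn (extClosure S)
    {d | ∀ s ∈ S, ∀ m : ℤ, 0 < m → ∀ f : (shiftFunctor C m).obj s ⟶ d, f = 0} ∧
  (∀ d : C, ∃ N : ℤ, ∀ m : ℤ, m ≤ N → ∀ s ∈ S, ∀ f : d ⟶ (shiftFunctor C m).obj s, f = 0) ∧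
  (∀ d : C, ∃ N : ℤ, ∀ m : ℤ, N ≤ m → ∀ s ∈ S, ∀ f : (shiftFunctor C m).obj s ⟶ d, f = 0)

/-- `f : p → h` is an epimorphism in the heart `H`, i.e. fits in a triangle
`a → p → h → a[1]` with `a ∈ H`. -/
def IsEpiIn (H : Set C) {p h : C} (f : p ⟶ h) : Prop :=
  ∃ (a : C) (i : a ⟶ p) (w : h ⟶ (shiftFunctor C (1 : ℤ)).obj a),
    a ∈ H ∧ Triangle.mk i f w ∈ (distTriang C)

/-- `f : h → i` is a monomorphism in the heart `H`. -/
def IsMonoIn (H : Set C) {h i : C} (f : h ⟶ i) : Prop :=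
  ∃ (b : C) (q : i ⟶ b) (w : b ⟶ (shiftFunctor C (1 : ℤ)).obj h),
    b ∈ H ∧ Triangle.mk f q w ∈ (distTriang C)

def IsProjectiveIn (H : Set C) (p : C) : Prop :=
  p ∈ H ∧ ∀ ⦃x y : C⦄ (f : x ⟶ y), x ∈ H → y ∈ H → IsEpiIn H f →
    ∀ g : p ⟶ y, ∃ l : p ⟶ x, l ≫ f = g

def IsInjectiveIn (H : Set C) (i : C) : Prop :=
  i ∈ H ∧ ∀ ⦃x y : C⦄ (f : x ⟶ y), x ∈ H → y ∈ H → IsMonoIn H f →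
    ∀ g : x ⟶ i, ∃ l : y ⟶ i, f ≫ l = g

def EnoughProjectivesIn (H : Set C) : Prop :=
  ∀ h ∈ H, ∃ (p : C) (f : p ⟶ h), IsProjectiveIn H p ∧ IsEpiIn H f

def EnoughInjectivesIn (H : Set C) : Prop :=
  ∀ h ∈ H, ∃ (i : C) (f : h ⟶ i), IsInjectiveIn H i ∧ IsMonoIn H f


/-!
For the iterated non-split self-extensions `t` of `s₁`, `dim Hom(t, s₁)` stays `1` while
`dim Hom(t, s₂[1])` grows without bound, since every extension step adds a copy of
`Ext¹(s₁, s₂) ≠ 0`. For a fixed `x ∈ ⟨s₁⟩` however, `dim Hom(t, x)` is at most a fixed multiple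
of `dim Hom(t, s₁)`, so no map `x → s₂[1]` is surjective on `Hom(t, -)` for all such `t`.

In the tilt, `s₂` is torsion-free. A simple object of the tilt either lies in `⟨s₁⟩[-1]`,
which receives no maps from `s₂`, or in `s₁^⊥ ∩ H`. The latter is impossible: the Euler form
`⟨s₁, -⟩ = dim Hom(s₁, -) - dim Ext¹(s₁, -)` is `≤ 0` on `H` and vanishes only on `⟨s₁⟩`, so a
nonzero `u ∈ s₁^⊥ ∩ H` has a non-split extension `u → E → s₁`, and `s₁[-1] → u → E` is then a
proper subobject in the tilt. Hence `s₂` is not filtered by the simples of the tilt.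
-/

set_option linter.unusedSectionVars false

lemma mem_rPerp_singleton {s d : C} (h : ∀ f : s ⟶ d, f = 0) : d ∈ rPerp {s} := by
  rintro _ rfl f
  exact h f

section Vanishing

lemma hom_eq_zero_of_iso {a a' b b' : C} (e₁ : a ≅ a') (e₂ : b ≅ b')
    (h : ∀ f : a ⟶ b, f = 0) (f : a' ⟶ b') : f = 0 := by
  simpa using congrArg (fun φ => e₁.inv ≫ φ ≫ e₂.hom) (h (e₁.hom ≫ f ≫ e₂.inv))

lemma hom_shift_eq_zero (n : ℤ) {a b : C} (h : ∀ f : a ⟶ b, f = 0) (f : a⟦n⟧ ⟶ b⟦n⟧) :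
    f = 0 := by
  obtain ⟨g, rfl⟩ := (shiftFunctor C n).map_surjective f
  rw [h g, Functor.map_zero]

lemma hom_eq_zero_of_shift (n : ℤ) {a b : C} (h : ∀ f : a⟦n⟧ ⟶ b⟦n⟧, f = 0) (f : a ⟶ b) :
    f = 0 :=
  (shiftFunctor C n).map_injective (by rw [h (f⟦n⟧'), Functor.map_zero])

lemma hom_to_shift_neg_eq_zero {a b : C} (h : ∀ f : a⟦(1 : ℤ)⟧ ⟶ b, f = 0)
    (f : a ⟶ b⟦(-1 : ℤ)⟧) : f = 0 :=
  hom_eq_zero_of_shift 1 (hom_eq_zero_of_iso (Iso.refl _) (shiftNegShift b (1 : ℤ)).symm h) f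

lemma hom_from_shift_neg_eq_zero {a b : C} (h : ∀ f : a ⟶ b⟦(1 : ℤ)⟧, f = 0)
    (f : a⟦(-1 : ℤ)⟧ ⟶ b) : f = 0 :=
  hom_eq_zero_of_shift 1 (hom_eq_zero_of_iso (shiftNegShift a (1 : ℤ)).symm (Iso.refl _) h) f

variable {T : Triangle C}

lemma eq_zero_of_comp_mor₂_eq_zero (hT : T ∈ distTriang C) {z : C}
    (h : ∀ f : z ⟶ T.obj₁, f = 0) (φ : z ⟶ T.obj₂) (hφ : φ ≫ T.mor₂ = 0) : φ = 0 := by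
  obtain ⟨ψ, rfl⟩ := Triangle.coyoneda_exact₂ T hT φ hφ
  rw [h ψ, zero_comp]

lemma eq_zero_of_comp_mor₃_eq_zero (hT : T ∈ distTriang C) {z : C}
    (h : ∀ f : z ⟶ T.obj₂, f = 0) (φ : z ⟶ T.obj₃) (hφ : φ ≫ T.mor₃ = 0) : φ = 0 := by
  obtain ⟨ψ, rfl⟩ := Triangle.coyoneda_exact₃ T hT φ hφ
  rw [h ψ, zero_comp]

lemma eq_zero_of_mor₁_comp_eq_zero (hT : T ∈ distTriang C) {z : C}
    (h : ∀ f : T.obj₃ ⟶ z, f = 0) (φ : T.obj₂ ⟶ z) (hφ : T.mor₁ ≫ φ = 0) : φ = 0 := by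
  obtain ⟨ψ, rfl⟩ := Triangle.yoneda_exact₂ T hT φ hφ
  rw [h ψ, comp_zero]

lemma eq_zero_of_mor₂_comp_eq_zero (hT : T ∈ distTriang C) {z : C}
    (h : ∀ f : T.obj₁⟦(1 : ℤ)⟧ ⟶ z, f = 0) (φ : T.obj₃ ⟶ z) (hφ : T.mor₂ ≫ φ = 0) : φ = 0 := by
  obtain ⟨ψ, rfl⟩ := Triangle.yoneda_exact₃ T hT φ hφ
  rw [h ψ, comp_zero]

end Vanishing

lemma extClosure_subset_rPerp {S A : Set C} (h : S ⊆ rPerp A) : extClosure S ⊆ rPerp A := by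
  intro d hd
  induction hd with
  | of s hs => exact h hs
  | zero z hz => exact fun _ _ f => hz.eq_of_tgt f 0
  | iso a b e _ ih => exact fun s hs => hom_eq_zero_of_iso (Iso.refl s) e (ih s hs)
  | ext a d b f g w hT _ _ iha ihb =>
      exact fun s hs φ => eq_zero_of_comp_mor₂_eq_zero hT (iha s hs) φ (ihb s hs _)

def IsHereditary (H : Set C) : Prop :=
  ∀ a b : C, a ∈ H → b ∈ H → ∀ n : ℤ, 2 ≤ n → ∀ f : a ⟶ (shiftFunctor C n).obj b, f = 0

lemma IsHereditary.hom_shift_shift_eq_zero {H : Set C} (hH : IsHereditary H) {a b : C}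
    (ha : a ∈ H) (hb : b ∈ H) (f : a ⟶ b⟦(1 : ℤ)⟧⟦(1 : ℤ)⟧) : f = 0 :=
  hom_eq_zero_of_iso (Iso.refl a) ((shiftFunctorAdd' C 1 1 2 (by norm_num)).app b)
    (hH a b ha hb 2 le_rfl) f

namespace IsTStructure

variable {X Y : Set C}

lemma shift_mem (hTS : IsTStructure X Y) {x : C} (hx : x ∈ X) : x⟦(1 : ℤ)⟧ ∈ X :=
  hTS.shift ⟨x, hx, ⟨Iso.refl _⟩⟩

lemma mem_X_of_forall (hTS : IsTStructure X Y) {d : C} (h : ∀ y ∈ Y, ∀ f : d ⟶ y, f = 0) :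
    d ∈ X := by
  obtain ⟨x, y, f, g, w, hx, hy, hT⟩ := hTS.gen d
  have hy0 : IsZero y := (IsZero.iff_id_eq_zero y).2 <|
    eq_zero_of_mor₂_comp_eq_zero hT (hTS.hom (hTS.shift_mem hx) hy) (𝟙 y) (h y hy _)
  have : IsIso f := (Triangle.isZero₃_iff_isIso₁ _ hT).1 hy0
  exact hTS.isoX (asIso f) hx

lemma mem_Y_of_forall (hTS : IsTStructure X Y) {d : C} (h : ∀ x ∈ X, ∀ f : x ⟶ d, f = 0) :
    d ∈ Y := by
  obtain ⟨x, y, f, g, w, hx, hy, hT⟩ := hTS.gen d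
  have hx0 : IsZero x := (IsZero.iff_id_eq_zero x).2 <|
    eq_zero_of_comp_mor₂_eq_zero (inv_rot_of_distTriang _ hT)
      (hom_to_shift_neg_eq_zero (hTS.hom (hTS.shift_mem hx) hy)) (𝟙 x) (h x hx _)
  have : IsIso g := (Triangle.isZero₁_iff_isIso₂ _ hT).1 hx0
  exact hTS.isoY (asIso g).symm hy

lemma mem_X_of_triangle (hTS : IsTStructure X Y) {T : Triangle C} (hT : T ∈ distTriang C)
    (h₁ : T.obj₁ ∈ X) (h₃ : T.obj₃ ∈ X) : T.obj₂ ∈ X :=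
  hTS.mem_X_of_forall fun _ hy φ =>
    eq_zero_of_mor₁_comp_eq_zero hT (hTS.hom h₃ hy) φ (hTS.hom h₁ hy _)

lemma hom_shift_heart_eq_zero (hTS : IsTStructure X Y) {a b : C} (ha : a ∈ X)
    (hb : b ∈ heart X Y) (f : a⟦(1 : ℤ)⟧ ⟶ b) : f = 0 := by
  obtain ⟨y, hy, ⟨e⟩⟩ := hb.2
  exact hom_eq_zero_of_iso (Iso.refl _) e (hom_shift_eq_zero 1 (hTS.hom ha hy)) f

lemma hom_heart_shift_neg_eq_zero (hTS : IsTStructure X Y) {a b : C} (ha : a ∈ X)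
    (hb : b ∈ heart X Y) (f : a ⟶ b⟦(-1 : ℤ)⟧) : f = 0 :=
  hom_to_shift_neg_eq_zero (hTS.hom_shift_heart_eq_zero ha hb) f

lemma mem_heart_of (hTS : IsTStructure X Y) {d : C} (hd : d ∈ X)
    (h : ∀ x ∈ X, ∀ f : x⟦(1 : ℤ)⟧ ⟶ d, f = 0) : d ∈ heart X Y :=
  ⟨hd, d⟦(-1 : ℤ)⟧, hTS.mem_Y_of_forall fun x hx => hom_to_shift_neg_eq_zero (h x hx),
    ⟨shiftNegShift d (1 : ℤ)⟩⟩

lemma mem_heart_of_iso (hTS : IsTStructure X Y) {a b : C} (e : a ≅ b) (ha : a ∈ heart X Y) :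
    b ∈ heart X Y := by
  obtain ⟨y, hy, ⟨e'⟩⟩ := ha.2
  exact ⟨hTS.isoX e ha.1, y, hy, ⟨e' ≪≫ e⟩⟩

lemma mem_heart_of_isZero (hTS : IsTStructure X Y) {z : C} (h : IsZero z) : z ∈ heart X Y :=
  ⟨hTS.zeroX z h, z, hTS.zeroY z h, ⟨((shiftFunctor C (1 : ℤ)).map_isZero h).iso h⟩⟩

lemma mem_heart_of_triangle (hTS : IsTStructure X Y) {T : Triangle C} (hT : T ∈ distTriang C)
    (h₁ : T.obj₁ ∈ heart X Y) (h₃ : T.obj₃ ∈ heart X Y) : T.obj₂ ∈ heart X Y :=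
  hTS.mem_heart_of (hTS.mem_X_of_triangle hT h₁.1 h₃.1) fun _ hx φ =>
    eq_zero_of_comp_mor₂_eq_zero hT (hTS.hom_shift_heart_eq_zero hx h₁) φ
      (hTS.hom_shift_heart_eq_zero hx h₃ _)

lemma extClosure_subset_heart (hTS : IsTStructure X Y) {S : Set C} (hS : S ⊆ heart X Y) :
    extClosure S ⊆ heart X Y := by
  intro d hd
  induction hd with
  | of s hs => exact hS hs
  | zero z hz => exact hTS.mem_heart_of_isZero hz
  | iso x y e _ ih => exact hTS.mem_heart_of_iso e ih
  | ext a d b f g w hT _ _ iha ihb => exact hTS.mem_heart_of_triangle hT iha ihb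

/-- `x` is the kernel of `f` and `I` its coimage, both read off the truncation triangle
`x → c⟦-1⟧ → y` of the shifted cone `c` of `f`. -/
lemma exists_kernel_triangle (hTS : IsTStructure X Y) {a b c : C} (ha : a ∈ heart X Y)
    (hb : b ∈ heart X Y) {f : a ⟶ b} {g : b ⟶ c} {w : c ⟶ a⟦(1 : ℤ)⟧}
    (hT : Triangle.mk f g w ∈ distTriang C) :
    ∃ (x I : C) (ι : x ⟶ a) (β : a ⟶ I) (γ : I ⟶ x⟦(1 : ℤ)⟧),
      x ∈ heart X Y ∧ I ∈ heart X Y ∧ Triangle.mk ι β γ ∈ distTriang C ∧ ι ≫ f = 0 ∧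
        (IsZero x → c ∈ heart X Y) := by
  have hTm := inv_rot_of_distTriang _ hT
  set m : c⟦(-1 : ℤ)⟧ ⟶ a := (Triangle.mk f g w).invRotate.mor₁
  obtain ⟨x, y, u, v, θ, hx, hy, hTx⟩ := hTS.gen (c⟦(-1 : ℤ)⟧)
  have hker : ∀ z ∈ X, ∀ χ : z ⟶ x, χ ≫ u ≫ m = 0 → χ = 0 := fun z hz χ hχ =>
    eq_zero_of_comp_mor₂_eq_zero (inv_rot_of_distTriang _ hTx)
      (hom_to_shift_neg_eq_zero (hTS.hom (hTS.shift_mem hz) hy)) χ <|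
        eq_zero_of_comp_mor₂_eq_zero (inv_rot_of_distTriang _ hTm)
          (hTS.hom_heart_shift_neg_eq_zero hz hb) _ ((assoc _ _ _).trans hχ)
  have hxH : x ∈ heart X Y := hTS.mem_heart_of hx fun z hz ψ =>
    hker _ (hTS.shift_mem hz) ψ (hTS.hom_shift_heart_eq_zero hz ha _)
  obtain ⟨I, β, γ, hTI⟩ := distinguished_cocone_triangle (u ≫ m)
  have hIH : I ∈ heart X Y := by
    refine hTS.mem_heart_of
      (hTS.mem_X_of_triangle (rot_of_distTriang _ hTI) ha.1 (hTS.shift_mem hx)) fun z hz ψ => ?_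
    obtain ⟨χ, hχ⟩ := (shiftFunctor C (1 : ℤ)).map_surjective (ψ ≫ γ)
    have hχ0 : χ = 0 := hker z hz χ <| (shiftFunctor C (1 : ℤ)).map_injective <| by
      have : γ ≫ (u ≫ m)⟦(1 : ℤ)⟧' = 0 := comp_distTriang_mor_zero₃₁ _ hTI
      rw [Functor.map_comp, hχ, Functor.map_zero, assoc, this, comp_zero]
    exact eq_zero_of_comp_mor₃_eq_zero hTI (hTS.hom_shift_heart_eq_zero hz ha) ψ
      (show ψ ≫ γ = 0 by rw [← hχ, hχ0, Functor.map_zero])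
  have hmf : m ≫ f = 0 := comp_distTriang_mor_zero₁₂ _ hTm
  refine ⟨x, I, u ≫ m, β, γ, hxH, hIH, hTI, by rw [assoc, hmf, comp_zero], fun hx0 => ?_⟩
  have : IsIso v := (Triangle.isZero₁_iff_isIso₂ _ hTx).1 hx0
  exact ⟨hTS.mem_X_of_triangle (rot_of_distTriang _ hT) hb.1 (hTS.shift_mem ha.1),
    c⟦(-1 : ℤ)⟧, hTS.isoY (asIso v).symm hy, ⟨shiftNegShift c (1 : ℤ)⟩⟩

lemma hom_eq_zero_of_isSimpleIn (hTS : IsTStructure X Y) {s₁ s₂ : C}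
    (h₁ : IsSimpleIn (heart X Y) s₁) (h₂ : IsSimpleIn (heart X Y) s₂)
    (hne : ¬ Nonempty (s₁ ≅ s₂)) (f : s₁ ⟶ s₂) : f = 0 := by
  obtain ⟨c, g, w, hT⟩ := distinguished_cocone_triangle f
  obtain ⟨x, I, ι, β, γ, hx, hI, hTI, hιf, hc⟩ := hTS.exists_kernel_triangle h₁.1 h₂.1 hT
  rcases h₁.2.2 x I ι β γ hx hI hTI with hx0 | hI0
  · rcases h₂.2.2 s₁ c f g w h₁.1 (hc hx0) hT with hs₁ | hc0
    · exact absurd hs₁ h₁.2.1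
    · have : IsIso f := (Triangle.isZero₃_iff_isIso₁ _ hT).1 hc0
      exact absurd ⟨asIso f⟩ hne
  · have : IsIso ι := (Triangle.isZero₃_iff_isIso₁ _ hTI).1 hI0
    calc f = inv ι ≫ ι ≫ f := by simp
      _ = 0 := by rw [hιf, comp_zero]

lemma isZero_of_mem_extClosure_singleton (hTS : IsTStructure X Y) {s u : C}
    (hs : s ∈ heart X Y) (hu : u ∈ extClosure {s}) (h : ∀ f : s ⟶ u, f = 0) : IsZero u := by
  have hsub := hTS.extClosure_subset_heart (S := {s}) (by rintro _ rfl; exact hs)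
  induction hu with
  | of s' hs' =>
      obtain rfl : s' = s := hs'
      exact (IsZero.iff_id_eq_zero _).2 (h (𝟙 _))
  | zero z hz => exact hz
  | iso a b e _ ih => exact (ih (hom_eq_zero_of_iso (Iso.refl s) e.symm h)).of_iso e.symm
  | ext a d b f g w hT _ hb iha ihb =>
      have ha0 : IsZero a := iha fun φ =>
        eq_zero_of_comp_mor₂_eq_zero (inv_rot_of_distTriang _ hT)
          (hTS.hom_heart_shift_neg_eq_zero hs.1 (hsub hb)) φ (h _)
      have : IsIso g := (Triangle.isZero₁_iff_isIso₂ _ hT).1 ha0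
      exact Triangle.isZero₂_of_isZero₁₃ _ hT ha0
        (ihb (hom_eq_zero_of_iso (Iso.refl s) (asIso g) h))

end IsTStructure

open ZeroObject

def rightSimpleTilt (X Y : Set C) (s : C) : Set C :=
  star (rPerp {s} ∩ heart X Y) (shiftSet (extClosure {s}) (-1))

lemma mem_rightSimpleTilt_of_mem_rPerp {X Y : Set C} {s d : C}
    (hd : d ∈ rPerp {s} ∩ heart X Y) : d ∈ rightSimpleTilt X Y s :=
  ⟨d, 0, 𝟙 d, 0, 0, hd, ⟨0, .zero 0 (isZero_zero C),
    ⟨((shiftFunctor C (-1 : ℤ)).map_isZero (isZero_zero C)).iso (isZero_zero C)⟩⟩,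
    contractible_distinguished d⟩

lemma mem_rightSimpleTilt_of_mem_shiftSet {X Y : Set C} (hTS : IsTStructure X Y) {s d : C}
    (hd : d ∈ shiftSet (extClosure {s}) (-1)) : d ∈ rightSimpleTilt X Y s :=
  ⟨0, d, 0, 𝟙 d, 0, ⟨fun _ _ f => (isZero_zero C).eq_of_tgt f 0,
    hTS.mem_heart_of_isZero (isZero_zero C)⟩, hd, contractible_distinguished₁ d⟩

section Linear

variable (k : Type*) [Field k]

lemma finrank_le_add_of_exact {V₁ V₂ V₃ : Type*} [AddCommGroup V₁] [Module k V₁]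
    [AddCommGroup V₂] [Module k V₂] [AddCommGroup V₃] [Module k V₃]
    [Module.Finite k V₁] [Module.Finite k V₂] [Module.Finite k V₃]
    {f : V₁ →ₗ[k] V₂} {g : V₂ →ₗ[k] V₃} (h : Function.Exact f g) :
    Module.finrank k V₂ ≤ Module.finrank k V₁ + Module.finrank k V₃ := by
  have hg := g.finrank_range_add_finrank_ker
  rw [h.linearMap_ker_eq] at hg
  have := f.finrank_range_le
  have := (LinearMap.range g).finrank_le
  omega

lemma finrank_eq_add_of_exact {V₁ V₂ V₃ : Type*} [AddCommGroup V₁] [Module k V₁]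
    [AddCommGroup V₂] [Module k V₂] [AddCommGroup V₃] [Module k V₃] [Module.Finite k V₂]
    {f : V₁ →ₗ[k] V₂} {g : V₂ →ₗ[k] V₃} (hf : Function.Injective f) (h : Function.Exact f g)
    (hg : Function.Surjective g) :
    Module.finrank k V₂ = Module.finrank k V₁ + Module.finrank k V₃ := by
  have := g.finrank_range_add_finrank_ker
  rw [h.linearMap_ker_eq, LinearMap.finrank_range_of_inj hf, LinearMap.range_eq_top.2 hg,
    finrank_top] at this
  omega

variable [Linear k C]

lemma finrank_hom_eq_zero {a b : C} (h : ∀ f : a ⟶ b, f = 0) : Module.finrank k (a ⟶ b) = 0 :=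
  haveI : Subsingleton (a ⟶ b) := ⟨fun f g => (h f).trans (h g).symm⟩
  Module.finrank_zero_of_subsingleton

lemma exists_eq_smul_id {s : C} (h : Module.finrank k (s ⟶ s) = 1) (f : s ⟶ s) :
    ∃ c : k, f = c • 𝟙 s := by
  have hid : 𝟙 s ≠ 0 := fun h0 => by
    rw [finrank_hom_eq_zero k fun g => by rw [← comp_id g, h0, comp_zero]] at h
    exact zero_ne_one h
  obtain ⟨c, hc⟩ := (finrank_eq_one_iff_of_nonzero' _ hid).1 h f
  exact ⟨c, hc.symm⟩

lemma not_isZero_of_finrank_eq_one {s : C} (h : Module.finrank k (s ⟶ s) = 1) : ¬ IsZero s :=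
  fun hs => by simp [finrank_hom_eq_zero k fun f => hs.eq_of_src f 0] at h

lemma exact_rightComp (A : C) {B₁ B₂ B₃ : C} {f : B₁ ⟶ B₂} {g : B₂ ⟶ B₃} (hfg : f ≫ g = 0)
    (h : ∀ φ : A ⟶ B₂, φ ≫ g = 0 → ∃ ψ, φ = ψ ≫ f) :
    Function.Exact (Linear.rightComp k A f) (Linear.rightComp k A g) := by
  intro φ
  refine ⟨fun hφ => ?_, ?_⟩
  · obtain ⟨ψ, rfl⟩ := h φ hφ
    exact ⟨ψ, rfl⟩
  · rintro ⟨ψ, rfl⟩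
    simp [hfg]

lemma exact_leftComp (B : C) {A₁ A₂ A₃ : C} {f : A₁ ⟶ A₂} {g : A₂ ⟶ A₃} (hfg : f ≫ g = 0)
    (h : ∀ φ : A₂ ⟶ B, f ≫ φ = 0 → ∃ ψ, φ = g ≫ ψ) :
    Function.Exact (Linear.leftComp k B g) (Linear.leftComp k B f) := by
  intro φ
  refine ⟨fun hφ => ?_, ?_⟩
  · obtain ⟨ψ, rfl⟩ := h φ hφ
    exact ⟨ψ, rfl⟩
  · rintro ⟨ψ, rfl⟩
    simp [reassoc_of% hfg]

section Triangle

variable {T : Triangle C}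

lemma injective_rightComp_mor₁ (hT : T ∈ distTriang C) {A : C}
    (h : ∀ f : A ⟶ T.obj₃⟦(-1 : ℤ)⟧, f = 0) :
    Function.Injective (Linear.rightComp k A T.mor₁) :=
  (injective_iff_map_eq_zero _).2 fun φ hφ =>
    eq_zero_of_comp_mor₂_eq_zero (inv_rot_of_distTriang _ hT) h φ hφ

lemma surjective_rightComp_shift_mor₂ (hT : T ∈ distTriang C) {A : C}
    (h : ∀ f : A ⟶ T.obj₁⟦(1 : ℤ)⟧⟦(1 : ℤ)⟧, f = 0) :
    Function.Surjective (Linear.rightComp k A (T.mor₂⟦(1 : ℤ)⟧')) := fun φ => by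
  obtain ⟨ψ, hψ⟩ := Triangle.coyoneda_exact₃ _
    (rot_of_distTriang _ (rot_of_distTriang _ (rot_of_distTriang _ hT))) φ (h _)
  refine ⟨-ψ, ?_⟩
  rw [hψ]
  exact (Preadditive.neg_comp _ _).trans (Preadditive.comp_neg _ _).symm

lemma exact_rightComp_mor₁_mor₂ (hT : T ∈ distTriang C) (A : C) :
    Function.Exact (Linear.rightComp k A T.mor₁) (Linear.rightComp k A T.mor₂) :=
  exact_rightComp k A (comp_distTriang_mor_zero₁₂ _ hT) (Triangle.coyoneda_exact₂ _ hT)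

lemma exact_rightComp_shift (hT : T ∈ distTriang C) (A : C) :
    Function.Exact (Linear.rightComp k A (T.mor₁⟦(1 : ℤ)⟧'))
      (Linear.rightComp k A (T.mor₂⟦(1 : ℤ)⟧')) := by
  refine exact_rightComp k A ?_ fun φ hφ => ?_
  · rw [← Functor.map_comp, comp_distTriang_mor_zero₁₂ _ hT, Functor.map_zero]
  · obtain ⟨ψ, hψ⟩ := Triangle.coyoneda_exact₁ _ (rot_of_distTriang _ hT) φ hφ
    refine ⟨-ψ, ?_⟩
    rw [hψ]
    exact (Preadditive.comp_neg _ _).trans (Preadditive.neg_comp _ _).symm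

lemma injective_leftComp_mor₂ (hT : T ∈ distTriang C) {B : C}
    (h : ∀ f : T.obj₁⟦(1 : ℤ)⟧ ⟶ B, f = 0) :
    Function.Injective (Linear.leftComp k B T.mor₂) :=
  (injective_iff_map_eq_zero _).2 fun φ hφ => eq_zero_of_mor₂_comp_eq_zero hT h φ hφ

lemma surjective_leftComp_mor₁ (hT : T ∈ distTriang C) {B : C}
    (h : ∀ f : T.obj₃⟦(-1 : ℤ)⟧ ⟶ B, f = 0) :
    Function.Surjective (Linear.leftComp k B T.mor₁) := fun φ => by
  obtain ⟨ψ, hψ⟩ := Triangle.yoneda_exact₂ _ (inv_rot_of_distTriang _ hT) φ (h _)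
  exact ⟨ψ, hψ.symm⟩

variable [∀ x y : C, Module.Finite k (x ⟶ y)]

lemma finrank_hom_obj₂_le_add (hT : T ∈ distTriang C) (A : C) :
    Module.finrank k (A ⟶ T.obj₂) ≤
      Module.finrank k (A ⟶ T.obj₁) + Module.finrank k (A ⟶ T.obj₃) :=
  finrank_le_add_of_exact k (exact_rightComp_mor₁_mor₂ k hT A)

lemma finrank_obj₂_hom_eq_add (hT : T ∈ distTriang C) {B : C}
    (h₁ : ∀ f : T.obj₁⟦(1 : ℤ)⟧ ⟶ B, f = 0)
    (h₃ : ∀ f : T.obj₃⟦(-1 : ℤ)⟧ ⟶ B, f = 0) :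
    Module.finrank k (T.obj₂ ⟶ B) =
      Module.finrank k (T.obj₃ ⟶ B) + Module.finrank k (T.obj₁ ⟶ B) :=
  finrank_eq_add_of_exact k (injective_leftComp_mor₂ k hT h₁)
    (exact_leftComp k B (comp_distTriang_mor_zero₁₂ _ hT) (Triangle.yoneda_exact₂ _ hT))
    (surjective_leftComp_mor₁ k hT h₃)

lemma mor₁_comp_eq_zero_of_mor₃_ne_zero (hT : T ∈ distTriang C)
    (hEnd : Module.finrank k (T.obj₁ ⟶ T.obj₁) = 1) (h₃ : T.mor₃ ≠ 0)
    (φ : T.obj₂ ⟶ T.obj₁) : T.mor₁ ≫ φ = 0 := by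
  obtain ⟨c, hc⟩ := exists_eq_smul_id k hEnd (T.mor₁ ≫ φ)
  rcases eq_or_ne c 0 with rfl | hc0
  · rwa [zero_smul] at hc
  · have : Mono (T.mor₁ ≫ (c⁻¹ • φ)) := by
      rw [Linear.comp_smul, hc, smul_smul, inv_mul_cancel₀ hc0, one_smul]
      infer_instance
    exact absurd (Triangle.mor₃_eq_zero_of_mono₁ _ hT (mono_of_mono _ (c⁻¹ • φ))) h₃

lemma comp_mor₂_eq_zero_of_mor₃_ne_zero (hT : T ∈ distTriang C)
    (hEnd : Module.finrank k (T.obj₃ ⟶ T.obj₃) = 1) (h₃ : T.mor₃ ≠ 0)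
    (φ : T.obj₃ ⟶ T.obj₂) : φ ≫ T.mor₂ = 0 := by
  obtain ⟨c, hc⟩ := exists_eq_smul_id k hEnd (φ ≫ T.mor₂)
  rcases eq_or_ne c 0 with rfl | hc0
  · rwa [zero_smul] at hc
  · have : Epi ((c⁻¹ • φ) ≫ T.mor₂) := by
      rw [Linear.smul_comp, hc, smul_smul, inv_mul_cancel₀ hc0, one_smul]
      infer_instance
    exact absurd (Triangle.mor₃_eq_zero_of_epi₂ _ hT (epi_of_epi (c⁻¹ • φ) _)) h₃

end Triangle

variable [∀ x y : C, Module.Finite k (x ⟶ y)]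

noncomputable def eulerForm (s d : C) : ℤ :=
  Module.finrank k (s ⟶ d) - Module.finrank k (s ⟶ d⟦(1 : ℤ)⟧)

lemma eulerForm_congr (s : C) {a b : C} (e : a ≅ b) : eulerForm k s a = eulerForm k s b := by
  simp only [eulerForm, (Linear.homCongr k (Iso.refl s) e).finrank_eq,
    (Linear.homCongr k (Iso.refl s) ((shiftFunctor C (1 : ℤ)).mapIso e)).finrank_eq]

lemma eulerForm_eq_zero_of_isZero (s : C) {z : C} (hz : IsZero z) : eulerForm k s z = 0 := by
  simp [eulerForm, finrank_hom_eq_zero k fun f => hz.eq_of_tgt f 0,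
    finrank_hom_eq_zero k fun f => ((shiftFunctor C (1 : ℤ)).map_isZero hz).eq_of_tgt f 0]

lemma eulerForm_add {T : Triangle C} (hT : T ∈ distTriang C) {s : C}
    (h₃ : ∀ f : s ⟶ T.obj₃⟦(-1 : ℤ)⟧, f = 0) (h₁ : ∀ f : s ⟶ T.obj₁⟦(1 : ℤ)⟧⟦(1 : ℤ)⟧, f = 0) :
    eulerForm k s T.obj₂ = eulerForm k s T.obj₁ + eulerForm k s T.obj₃ := by
  have := Module.sum_neg_one_pow_finrank_eq_zero_of_exact_six _ _ _ _ _
    (injective_rightComp_mor₁ k hT h₃) (exact_rightComp_mor₁_mor₂ k hT s)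
    (exact_rightComp k s (comp_distTriang_mor_zero₂₃ _ hT) (Triangle.coyoneda_exact₃ _ hT))
    (exact_rightComp k s (comp_distTriang_mor_zero₃₁ _ hT) (Triangle.coyoneda_exact₁ _ hT))
    (exact_rightComp_shift k hT s) (surjective_rightComp_shift_mor₂ k hT h₁)
  simp only [eulerForm]
  linarith

lemma exists_finrank_hom_le_mul {s d : C} (hd : d ∈ extClosure {s}) :
    ∃ N : ℕ, ∀ t : C, Module.finrank k (t ⟶ d) ≤ N * Module.finrank k (t ⟶ s) := by
  induction hd with
  | of s' hs' =>
      obtain rfl : s' = s := hs'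
      exact ⟨1, fun t => (one_mul _).ge⟩
  | zero z hz =>
      exact ⟨0, fun t => by rw [finrank_hom_eq_zero k fun f : t ⟶ z => hz.eq_of_tgt f 0, zero_mul]⟩
  | iso a b e _ ih =>
      obtain ⟨N, hN⟩ := ih
      exact ⟨N, fun t => (Linear.homCongr k (Iso.refl t) e).finrank_eq ▸ hN t⟩
  | ext a d b f g w hT _ _ iha ihb =>
      obtain ⟨Na, hNa⟩ := iha
      obtain ⟨Nb, hNb⟩ := ihb
      refine ⟨Na + Nb, fun t => ?_⟩
      have : Module.finrank k (t ⟶ d) ≤ Module.finrank k (t ⟶ a) + Module.finrank k (t ⟶ b) :=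
        finrank_hom_obj₂_le_add k hT t
      linarith [hNa t, hNb t, add_mul Na Nb (Module.finrank k (t ⟶ s))]

theorem not_hasRightApprox_extClosure_singleton {s d : C}
    (h : ∀ n : ℕ, ∃ t ∈ extClosure {s},
      Module.finrank k (t ⟶ s) ≤ 1 ∧ n < Module.finrank k (t ⟶ d)) :
    ¬ HasRightApprox (extClosure {s}) d := by
  rintro ⟨x, f, hx, hf⟩
  obtain ⟨N, hN⟩ := exists_finrank_hom_le_mul k hx
  obtain ⟨t, ht, hts, htd⟩ := h N
  have : Module.finrank k (t ⟶ d) ≤ Module.finrank k (t ⟶ x) :=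
    LinearMap.finrank_le_finrank_of_surjective (f := Linear.rightComp k t f) fun g => hf ht g
  linarith [hN t, Nat.mul_le_mul_left N hts]

end Linear

section Heart

variable (k : Type*) [Field k] [Linear k C] [∀ x y : C, Module.Finite k (x ⟶ y)]
  {X Y : Set C}

theorem exists_mem_extClosure_lt_finrank_hom (hTS : IsTStructure X Y)
    (hhered : IsHereditary (heart X Y)) {s₁ s₂ : C} (hs₁ : s₁ ∈ heart X Y)
    (hs₂ : s₂ ∈ heart X Y) (hEnd₁ : Module.finrank k (s₁ ⟶ s₁) = 1)
    (hExt₁₁ : 0 < Module.finrank k (s₁ ⟶ s₁⟦(1 : ℤ)⟧))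
    (hExt₁₂ : 0 < Module.finrank k (s₁ ⟶ s₂⟦(1 : ℤ)⟧)) (h₁₂ : ∀ f : s₁ ⟶ s₂, f = 0) (n : ℕ) :
    ∃ t ∈ extClosure {s₁},
      Module.finrank k (t ⟶ s₁) ≤ 1 ∧ n < Module.finrank k (t ⟶ s₂⟦(1 : ℤ)⟧) := by
  have hsub := hTS.extClosure_subset_heart (S := {s₁}) (by rintro _ rfl; exact hs₁)
  -- a nonzero `t → s₁⟦1⟧` provides the next non-split extension of `t` by `s₁`
  suffices ∀ n : ℕ, ∃ t ∈ extClosure {s₁}, Module.finrank k (t ⟶ s₁) ≤ 1 ∧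
      0 < Module.finrank k (t ⟶ s₁⟦(1 : ℤ)⟧) ∧ n < Module.finrank k (t ⟶ s₂⟦(1 : ℤ)⟧) by
    obtain ⟨t, ht, h₁, -, h₂⟩ := this n
    exact ⟨t, ht, h₁, h₂⟩
  intro n
  induction n with
  | zero => exact ⟨s₁, .of s₁ rfl, hEnd₁.le, hExt₁₁, hExt₁₂⟩
  | succ n ih =>
    obtain ⟨x, hx, hx₁, hxExt, hxn⟩ := ih
    obtain ⟨w, hw⟩ := Module.finrank_pos_iff_exists_ne_zero.1 hxExt
    obtain ⟨x', ι, p, hT⟩ := distinguished_cocone_triangle₂ w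
    have hvan : ∀ q ∈ heart X Y, ∀ f : x⟦(-1 : ℤ)⟧ ⟶ q⟦(1 : ℤ)⟧, f = 0 := fun q hq =>
      hom_from_shift_neg_eq_zero (hhered.hom_shift_shift_eq_zero (hsub hx) hq)
    have hp : Function.Surjective (Linear.leftComp k s₁ p) := fun φ => by
      obtain ⟨χ, hχ⟩ :=
        Triangle.yoneda_exact₂ _ hT φ (mor₁_comp_eq_zero_of_mor₃_ne_zero k hT hEnd₁ hw φ)
      exact ⟨χ, hχ.symm⟩
    have hdim : Module.finrank k (x' ⟶ s₂⟦(1 : ℤ)⟧) =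
        Module.finrank k (x ⟶ s₂⟦(1 : ℤ)⟧) + Module.finrank k (s₁ ⟶ s₂⟦(1 : ℤ)⟧) :=
      finrank_obj₂_hom_eq_add k hT (hom_shift_eq_zero 1 h₁₂) (hvan s₂ hs₂)
    refine ⟨x', .ext _ _ _ ι p w hT (.of s₁ rfl) hx,
      (LinearMap.finrank_le_finrank_of_surjective hp).trans hx₁,
      hExt₁₁.trans_le (LinearMap.finrank_le_finrank_of_surjective
        (surjective_leftComp_mor₁ k hT (hvan s₁ hs₁))), ?_⟩
    omega

lemma eulerForm_nonpos_of_mem_extClosure (hTS : IsTStructure X Y)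
    (hhered : IsHereditary (heart X Y)) {s : C} (hs : s ∈ heart X Y) {S A : Set C}
    (hS : S ⊆ heart X Y)
    (hSA : ∀ u ∈ S, eulerForm k s u ≤ 0 ∧ (eulerForm k s u = 0 → u ∈ extClosure A)) {u : C}
    (hu : u ∈ extClosure S) :
    eulerForm k s u ≤ 0 ∧ (eulerForm k s u = 0 → u ∈ extClosure A) := by
  have hsub := hTS.extClosure_subset_heart hS
  induction hu with
  | of u hu => exact hSA u hu
  | zero z hz => exact ⟨(eulerForm_eq_zero_of_isZero k s hz).le, fun _ => .zero z hz⟩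
  | iso a b e _ ih =>
      rw [← eulerForm_congr k s e]
      exact ⟨ih.1, fun h => .iso a b e (ih.2 h)⟩
  | ext a d b f g w hT ha hb iha ihb =>
      have hadd : eulerForm k s d = eulerForm k s a + eulerForm k s b :=
        eulerForm_add k hT (hTS.hom_heart_shift_neg_eq_zero hs.1 (hsub hb))
          (hhered.hom_shift_shift_eq_zero hs (hsub ha))
      refine ⟨by linarith [iha.1, ihb.1], fun h => .ext a d b f g w hT ?_ ?_⟩
      · exact iha.2 (by linarith [iha.1, ihb.1])
      · exact ihb.2 (by linarith [iha.1, ihb.1])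

lemma exists_ne_zero_hom_shift_of_mem_rPerp (hTS : IsTStructure X Y)
    (hhered : IsHereditary (heart X Y)) (hlen : HeartIsLength (heart X Y)) {s₁ s₂ : C}
    (hsimples : simplesOf (heart X Y) = isoClosure {s₁, s₂}) (hs₁ : s₁ ∈ heart X Y)
    (h₁₁ : eulerForm k s₁ s₁ = 0) (h₁₂ : eulerForm k s₁ s₂ < 0) {u : C}
    (hu : u ∈ rPerp {s₁} ∩ heart X Y) (hu0 : ¬ IsZero u) :
    ∃ ξ : s₁ ⟶ u⟦(1 : ℤ)⟧, ξ ≠ 0 := by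
  by_contra! hξ
  have hsimple : ∀ v ∈ simplesOf (heart X Y),
      eulerForm k s₁ v ≤ 0 ∧ (eulerForm k s₁ v = 0 → v ∈ extClosure {s₁}) := by
    intro v hv
    rw [hsimples] at hv
    obtain ⟨t, ht, ⟨e⟩⟩ := hv
    rw [← eulerForm_congr k s₁ e]
    rcases ht with rfl | rfl
    · exact ⟨h₁₁.le, fun _ => .iso _ _ e (.of _ rfl)⟩
    · exact ⟨h₁₂.le, fun h => absurd h h₁₂.ne⟩
  have hχ : eulerForm k s₁ u = 0 := by
    simp [eulerForm, finrank_hom_eq_zero k (hu.1 s₁ rfl), finrank_hom_eq_zero k hξ]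
  have hmem := (eulerForm_nonpos_of_mem_extClosure k hTS hhered hs₁ (fun v hv => hv.1) hsimple
    (hlen hu.2)).2 hχ
  exact hu0 (hTS.isZero_of_mem_extClosure_singleton hs₁ hmem (hu.1 s₁ rfl))

lemma not_isSimpleIn_rightSimpleTilt (hTS : IsTStructure X Y) {s u : C} (hs : s ∈ heart X Y)
    (hEnd : Module.finrank k (s ⟶ s) = 1) (hu : u ∈ rPerp {s} ∩ heart X Y)
    {ξ : s ⟶ u⟦(1 : ℤ)⟧} (hξ : ξ ≠ 0) : ¬ IsSimpleIn (rightSimpleTilt X Y s) u := by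
  rintro ⟨-, -, hsimple⟩
  obtain ⟨E, i, p, hT⟩ := distinguished_cocone_triangle₂ ξ
  have hE : E ∈ rPerp {s} ∩ heart X Y :=
    ⟨mem_rPerp_singleton fun φ => eq_zero_of_comp_mor₂_eq_zero hT (hu.1 s rfl) φ
      (comp_mor₂_eq_zero_of_mor₃_ne_zero k hT hEnd hξ φ),
      hTS.mem_heart_of_triangle hT hu.2 hs⟩
  rcases hsimple _ _ _ _ _ (mem_rightSimpleTilt_of_mem_shiftSet hTS ⟨s, .of s rfl, ⟨Iso.refl _⟩⟩)
    (mem_rightSimpleTilt_of_mem_rPerp hE) (inv_rot_of_distTriang _ hT) with h | h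
  · exact not_isZero_of_finrank_eq_one k hEnd
      (((shiftFunctor C (1 : ℤ)).map_isZero h).of_iso (shiftNegShift s (1 : ℤ)).symm)
  · have : IsIso ξ := (Triangle.isZero₂_iff_isIso₃ _ hT).1 h
    refine not_isZero_of_finrank_eq_one k hEnd ((IsZero.iff_id_eq_zero s).2 ?_)
    rw [← IsIso.hom_inv_id ξ, hTS.hom_shift_heart_eq_zero hu.2.1 hs (inv ξ), comp_zero]

lemma hom_eq_zero_of_isSimpleIn_rightSimpleTilt (hTS : IsTStructure X Y)
    (hhered : IsHereditary (heart X Y)) (hlen : HeartIsLength (heart X Y)) {s₁ s₂ : C}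
    (hsimples : simplesOf (heart X Y) = isoClosure {s₁, s₂}) (hs₁ : s₁ ∈ heart X Y)
    (hEnd₁ : Module.finrank k (s₁ ⟶ s₁) = 1) (h₁₁ : eulerForm k s₁ s₁ = 0)
    (h₁₂ : eulerForm k s₁ s₂ < 0) {x u : C} (hx : x ∈ X)
    (hu : IsSimpleIn (rightSimpleTilt X Y s₁) u) (f : x ⟶ u) : f = 0 := by
  obtain ⟨a, b, i, p, w, ha, hb, hT⟩ := hu.1
  rcases hu.2.2 a b i p w (mem_rightSimpleTilt_of_mem_rPerp ha)
    (mem_rightSimpleTilt_of_mem_shiftSet hTS hb) hT with ha0 | hb0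
  · obtain ⟨t, ht, ⟨e⟩⟩ := hb
    have ht' : t ∈ heart X Y :=
      hTS.extClosure_subset_heart (S := {s₁}) (by rintro _ rfl; exact hs₁) ht
    exact eq_zero_of_comp_mor₂_eq_zero hT (fun φ => ha0.eq_of_tgt φ 0) f
      (hom_eq_zero_of_iso (Iso.refl x) e (hTS.hom_heart_shift_neg_eq_zero hx ht') _)
  · have : IsIso i := (Triangle.isZero₃_iff_isIso₁ _ hT).1 hb0
    have huF : u ∈ rPerp {s₁} ∩ heart X Y :=
      ⟨fun s hs => hom_eq_zero_of_iso (Iso.refl s) (asIso i) (ha.1 s hs),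
        hTS.mem_heart_of_iso (asIso i) ha.2⟩
    obtain ⟨ξ, hξ⟩ :=
      exists_ne_zero_hom_shift_of_mem_rPerp k hTS hhered hlen hsimples hs₁ h₁₁ h₁₂ huF hu.2.1
    exact absurd hu (not_isSimpleIn_rightSimpleTilt k hTS hs₁ hEnd₁ huF hξ)

theorem not_heartIsLength_rightSimpleTilt (hTS : IsTStructure X Y)
    (hhered : IsHereditary (heart X Y)) (hlen : HeartIsLength (heart X Y)) {s₁ s₂ : C}
    (hsimples : simplesOf (heart X Y) = isoClosure {s₁, s₂}) (hs₁ : s₁ ∈ heart X Y)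
    (hs₂ : s₂ ∈ heart X Y) (hs₂0 : ¬ IsZero s₂) (hEnd₁ : Module.finrank k (s₁ ⟶ s₁) = 1)
    (h₁₁ : eulerForm k s₁ s₁ = 0) (h₁₂ : eulerForm k s₁ s₂ < 0) (hom₁₂ : ∀ f : s₁ ⟶ s₂, f = 0) :
    ¬ HeartIsLength (rightSimpleTilt X Y s₁) := fun hlen' => by
  have hs₂' : s₂ ∈ rightSimpleTilt X Y s₁ :=
    mem_rightSimpleTilt_of_mem_rPerp ⟨mem_rPerp_singleton hom₁₂, hs₂⟩
  have hperp := extClosure_subset_rPerp (A := {s₂}) (fun u hu => mem_rPerp_singleton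
    (hom_eq_zero_of_isSimpleIn_rightSimpleTilt k hTS hhered hlen hsimples hs₁ hEnd₁ h₁₁ h₁₂
      hs₂.1 hu)) (hlen' hs₂')
  exact hs₂0 ((IsZero.iff_id_eq_zero s₂).2 (hperp s₂ rfl (𝟙 s₂)))

end Heart

/-- `D^b(nil Q)` is described through its standard heart: hereditary, of finite length, with
simples `s₁ ≇ s₂`, `End(sᵢ) = k`, `Ext¹(s₁, s₁) = k = Ext¹(s₁, s₂)` and `Ext¹(s₂, -) = 0`. -/
theorem nilpotent_quiver_counterexample (k : Type*) [Field k] [Linear k C]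
    [∀ x y : C, Module.Finite k (x ⟶ y)] [IsIdempotentComplete C]
    {X Y : Set C} (hXY : IsLengthHeart X Y) {s₁ s₂ : C}
    (hsimples : simplesOf (heart X Y) = isoClosure {s₁, s₂})
    (hne : ¬ Nonempty (s₁ ≅ s₂))
    (hhered : ∀ a b : C, a ∈ heart X Y → b ∈ heart X Y →
      ∀ n : ℤ, 2 ≤ n → ∀ f : a ⟶ (shiftFunctor C n).obj b, f = 0)
    (hEnd₁ : Module.finrank k (s₁ ⟶ s₁) = 1)
    (hEnd₂ : Module.finrank k (s₂ ⟶ s₂) = 1)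
    (hExt₁₁ : Module.finrank k (s₁ ⟶ (shiftFunctor C (1 : ℤ)).obj s₁) = 1)
    (hExt₁₂ : Module.finrank k (s₁ ⟶ (shiftFunctor C (1 : ℤ)).obj s₂) = 1)
    (hExt₂₁ : ∀ f : s₂ ⟶ (shiftFunctor C (1 : ℤ)).obj s₁, f = 0)
    (hExt₂₂ : ∀ f : s₂ ⟶ (shiftFunctor C (1 : ℤ)).obj s₂, f = 0) :
    ¬ HasRightApprox (extClosure {s₁}) ((shiftFunctor C (1 : ℤ)).obj s₂) ∧
    ¬ HeartIsLength
        (star (rPerp {s₁} ∩ heart X Y) (shiftSet (extClosure {s₁}) (-1))) := by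
  obtain ⟨hTS, -, hlen⟩ := hXY
  have h₁ : s₁ ∈ simplesOf (heart X Y) := hsimples ▸ ⟨s₁, by simp, ⟨Iso.refl _⟩⟩
  have h₂ : s₂ ∈ simplesOf (heart X Y) := hsimples ▸ ⟨s₂, by simp, ⟨Iso.refl _⟩⟩
  have hom₁₂ : ∀ f : s₁ ⟶ s₂, f = 0 := hTS.hom_eq_zero_of_isSimpleIn h₁ h₂ hne
  have h₁₁ : eulerForm k s₁ s₁ = 0 := by simp [eulerForm, hEnd₁, hExt₁₁]
  have h₁₂ : eulerForm k s₁ s₂ < 0 := by simp [eulerForm, finrank_hom_eq_zero k hom₁₂, hExt₁₂]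
  refine ⟨not_hasRightApprox_extClosure_singleton k fun n => ?_,
    not_heartIsLength_rightSimpleTilt k hTS hhered hlen hsimples h₁.1 h₂.1 h₂.2.1 hEnd₁ h₁₁ h₁₂
      hom₁₂⟩
  exact exists_mem_extClosure_lt_finrank_hom k hTS hhered h₁.1 h₂.1 hEnd₁ (by omega) (by omega)
    hom₁₂ n

end SMPaper
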